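/- Let b be a connected, canonically compactifiable graph over a finite discrete measure space (X,m). Then for every β ∈ ℝ there exists a constant C > 0 such that Σ_{x∈X} e^{β(u(x)−ū)²} m(x) ≤ m(X) e^{C|β| Q(u)} for all u ∈ D(Q). In particular, for every β ∈ ℝ there is a constant C(β) > 0 such that Σ_{x∈X} e^{β u(x)²} m(x) ≤ C(β) for all u ∈ D(Q) with Q(u) = 1 and ū = 0. -/

import Mathlib

open scoped BigOperators

/-- `u` is square-summable with respect to the measure `m`, i.e. `u ∈ ℓ²(X,m)`. -/
def MemL2 {X : Type*} (m : X → ℝ) (u : X → ℝ) : Prop :=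
  Summable (fun x => u x ^ 2 * m x)

/-- `u` has finite energy: the sum defining `Q̃(u)` converges. -/
def FinEnergy {X : Type*} (b : X → X → ℝ) (u : X → ℝ) : Prop :=
  Summable (fun p : X × X => b p.1 p.2 * (u p.1 - u p.2) ^ 2)

/-- The energy `Q(u) = (1/2) Σ_{x,y} b(x,y) (u(x) - u(y))²`. -/
noncomputable def energy {X : Type*} (b : X → X → ℝ) (u : X → ℝ) : ℝ :=
  (1 / 2) * ∑' p : X × X, b p.1 p.2 * (u p.1 - u p.2) ^ 2

/-- The bilinear energy form `Q(u,v) = (1/2) Σ_{x,y} b(x,y)(u(x)-u(y))(v(x)-v(y))`. -/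
noncomputable def energyBil {X : Type*} (b : X → X → ℝ) (u v : X → ℝ) : ℝ :=
  (1 / 2) * ∑' p : X × X, b p.1 p.2 * (u p.1 - u p.2) * (v p.1 - v p.2)

/-- The form domain `D(Q) = ℓ²(X,m) ∩ D̃`. -/
def MemDQ {X : Type*} (b : X → X → ℝ) (m : X → ℝ) (u : X → ℝ) : Prop :=
  MemL2 m u ∧ FinEnergy b u

/-- The form norm `‖u‖_Q = (Q(u) + ‖u‖₂²)^{1/2}`. -/
noncomputable def formNorm {X : Type*} (b : X → X → ℝ) (m : X → ℝ) (u : X → ℝ) : ℝ :=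
  Real.sqrt (energy b u + ∑' x, u x ^ 2 * m x)

/-- `b` is a graph over `X`: symmetric, nonnegative, zero on the diagonal,
with summable rows. -/
structure IsGraph {X : Type*} (b : X → X → ℝ) : Prop where
  symm : ∀ x y, b x y = b y x
  nonneg : ∀ x y, 0 ≤ b x y
  diag : ∀ x, b x x = 0
  row_summable : ∀ x, Summable (fun y => b x y)

/-- The graph `b` is connected: any two points are joined by a path of edges of
positive weight. -/
def GraphConnected {X : Type*} (b : X → X → ℝ) : Prop :=
  ∀ x y : X, Relation.ReflTransGen (fun a c => 0 < b a c) x y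

/-- `(X,m)` is a finite discrete measure space: `m > 0` everywhere and `m(X) < ∞`. -/
structure FinMeasure {X : Type*} (m : X → ℝ) : Prop where
  pos : ∀ x, 0 < m x
  summable : Summable m

/-- The graph `b` over `(X,m)` is canonically compactifiable: every function in
`D(Q)` is bounded. -/
def CanCompact {X : Type*} (b : X → X → ℝ) (m : X → ℝ) : Prop :=
  ∀ u : X → ℝ, MemDQ b m u → ∃ M : ℝ, ∀ x, |u x| ≤ M

/-- `u ∈ D(L)` with `L u = f` for the Neumann Laplacian `L`:
`u ∈ D(Q)`, `f ∈ ℓ²(X,m)` and `Q(u,v) = ⟨f,v⟩` for all `v ∈ D(Q)`. -/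
def IsLap {X : Type*} (b : X → X → ℝ) (m : X → ℝ) (u f : X → ℝ) : Prop :=
  MemDQ b m u ∧ MemL2 m f ∧
    ∀ v : X → ℝ, MemDQ b m v → energyBil b u v = ∑' x, f x * v x * m x

/-- The mean `ū = ⟨u,1⟩ / m(X)`. -/
noncomputable def mean {X : Type*} (m : X → ℝ) (u : X → ℝ) : ℝ :=
  (∑' x, u x * m x) / (∑' x, m x)


section Aux

open Filter Topology

variable {X : Type*} {b : X → X → ℝ} {m : X → ℝ}

lemma l2sum_nonneg (hm : FinMeasure m) (u : X → ℝ) : 0 ≤ ∑' x, u x ^ 2 * m x :=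
  tsum_nonneg fun x => mul_nonneg (sq_nonneg _) (hm.pos x).le

lemma energy_nonneg (hb : IsGraph b) (u : X → ℝ) : 0 ≤ energy b u := by
  have h : 0 ≤ ∑' p : X × X, b p.1 p.2 * (u p.1 - u p.2) ^ 2 :=
    tsum_nonneg fun p => mul_nonneg (hb.nonneg _ _) (sq_nonneg _)
  unfold energy; linarith

lemma memL2_add (hm : FinMeasure m) {u v : X → ℝ} (hu : MemL2 m u) (hv : MemL2 m v) :
    MemL2 m (fun x => u x + v x) := by
  refine Summable.of_nonneg_of_le (fun x => mul_nonneg (sq_nonneg _) (hm.pos x).le)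
    (fun x => ?_) (((hu.mul_left 2).add (hv.mul_left 2)).congr (fun x => rfl))
  show (u x + v x) ^ 2 * m x ≤ 2 * (u x ^ 2 * m x) + 2 * (v x ^ 2 * m x)
  nlinarith [sq_nonneg (u x - v x), (hm.pos x).le, sq_nonneg (u x + v x)]

lemma memL2_smul (c : ℝ) {u : X → ℝ} (hu : MemL2 m u) : MemL2 m (fun x => c * u x) :=
  (hu.mul_left (c ^ 2)).congr (fun x => by ring)

lemma memL2_const (hm : FinMeasure m) (c : ℝ) : MemL2 m (fun _ => c) :=
  (hm.summable.mul_left (c ^ 2)).congr (fun x => rfl)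

lemma finEnergy_add (hb : IsGraph b) {u v : X → ℝ} (hu : FinEnergy b u) (hv : FinEnergy b v) :
    FinEnergy b (fun x => u x + v x) := by
  refine Summable.of_nonneg_of_le (fun p => mul_nonneg (hb.nonneg _ _) (sq_nonneg _))
    (fun p => ?_) (((hu.mul_left 2).add (hv.mul_left 2)).congr (fun p => rfl))
  have h0 := hb.nonneg p.1 p.2
  show b p.1 p.2 * ((u p.1 + v p.1) - (u p.2 + v p.2)) ^ 2 ≤
    2 * (b p.1 p.2 * (u p.1 - u p.2) ^ 2) + 2 * (b p.1 p.2 * (v p.1 - v p.2) ^ 2)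
  nlinarith [sq_nonneg ((u p.1 - u p.2) - (v p.1 - v p.2)),
    sq_nonneg ((u p.1 + v p.1) - (u p.2 + v p.2))]

lemma finEnergy_smul (c : ℝ) {u : X → ℝ} (hu : FinEnergy b u) :
    FinEnergy b (fun x => c * u x) :=
  (hu.mul_left (c ^ 2)).congr (fun p => by simp only []; ring)

lemma finEnergy_const (c : ℝ) : FinEnergy b (fun _ => c) :=
  summable_zero.congr (fun p => by simp)

lemma memDQ_add (hb : IsGraph b) (hm : FinMeasure m) {u v : X → ℝ}
    (hu : MemDQ b m u) (hv : MemDQ b m v) : MemDQ b m (fun x => u x + v x) :=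
  ⟨memL2_add hm hu.1 hv.1, finEnergy_add hb hu.2 hv.2⟩

lemma memDQ_smul (hb : IsGraph b) (c : ℝ) {u : X → ℝ} (hu : MemDQ b m u) :
    MemDQ b m (fun x => c * u x) :=
  ⟨memL2_smul c hu.1, finEnergy_smul c hu.2⟩

lemma memDQ_const (hb : IsGraph b) (hm : FinMeasure m) (c : ℝ) :
    MemDQ b m (fun _ => c) := ⟨memL2_const hm c, finEnergy_const c⟩

lemma memDQ_sub (hb : IsGraph b) (hm : FinMeasure m) {u v : X → ℝ}
    (hu : MemDQ b m u) (hv : MemDQ b m v) : MemDQ b m (fun x => u x - v x) := by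
  have := memDQ_add hb hm hu (memDQ_smul hb (-1) hv)
  exact ⟨(this.1).congr fun x => by show _ = _; ring_nf,
    (this.2).congr fun p => by show _ = _; ring_nf⟩

end Aux
section Aux2

open Filter Topology

variable {X : Type*} {b : X → X → ℝ} {m : X → ℝ}

lemma summable_mul_l2 (hm : FinMeasure m) {u v : X → ℝ} (hu : MemL2 m u) (hv : MemL2 m v) :
    Summable (fun x => u x * v x * m x) := by
  refine Summable.of_norm ?_
  refine Summable.of_nonneg_of_le (fun x => norm_nonneg _) (fun x => ?_)
    (((hu.mul_left (1/2)).add (hv.mul_left (1/2))).congr (fun x => rfl))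
  have h1 := (hm.pos x).le
  rw [Real.norm_eq_abs, abs_mul, abs_of_nonneg h1]
  have h2 : |u x * v x| ≤ (u x ^ 2 + v x ^ 2) / 2 := by
    rw [abs_mul]
    nlinarith [sq_nonneg (|u x| - |v x|), sq_abs (u x), sq_abs (v x), abs_nonneg (u x),
      abs_nonneg (v x)]
  show |u x * v x| * m x ≤ 1 / 2 * (u x ^ 2 * m x) + 1 / 2 * (v x ^ 2 * m x)
  nlinarith [mul_le_mul_of_nonneg_right h2 h1]

lemma summable_mul_m (hm : FinMeasure m) {u : X → ℝ} (hu : MemL2 m u) :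
    Summable (fun x => u x * m x) := by
  refine Summable.of_norm ?_
  refine Summable.of_nonneg_of_le (fun x => norm_nonneg _) (fun x => ?_)
    (((hu.mul_left (1/2)).add (hm.summable.mul_left (1/2))).congr (fun x => rfl))
  have h1 := (hm.pos x).le
  rw [Real.norm_eq_abs, abs_mul, abs_of_nonneg h1]
  have h2 : |u x| ≤ (u x ^ 2 + 1) / 2 := by
    nlinarith [sq_nonneg (|u x| - 1), sq_abs (u x), abs_nonneg (u x)]
  show |u x| * m x ≤ 1 / 2 * (u x ^ 2 * m x) + 1 / 2 * m x
  nlinarith [mul_le_mul_of_nonneg_right h2 h1]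

lemma summable_energy_cross (hb : IsGraph b) {u v : X → ℝ}
    (hu : FinEnergy b u) (hv : FinEnergy b v) :
    Summable (fun p : X × X => b p.1 p.2 * (u p.1 - u p.2) * (v p.1 - v p.2)) := by
  refine Summable.of_norm ?_
  refine Summable.of_nonneg_of_le (fun p => norm_nonneg _) (fun p => ?_)
    (((hu.mul_left (1/2)).add (hv.mul_left (1/2))).congr (fun p => rfl))
  have h0 := hb.nonneg p.1 p.2
  rw [Real.norm_eq_abs, abs_mul, abs_mul, abs_of_nonneg h0]
  show b p.1 p.2 * |u p.1 - u p.2| * |v p.1 - v p.2| ≤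
      1 / 2 * (b p.1 p.2 * (u p.1 - u p.2) ^ 2) + 1 / 2 * (b p.1 p.2 * (v p.1 - v p.2) ^ 2)
  nlinarith [sq_nonneg (|u p.1 - u p.2| - |v p.1 - v p.2|), sq_abs (u p.1 - u p.2),
    sq_abs (v p.1 - v p.2), abs_nonneg (u p.1 - u p.2), abs_nonneg (v p.1 - v p.2),
    mul_le_mul_of_nonneg_left (sq_nonneg (|u p.1 - u p.2| - |v p.1 - v p.2|)) h0]

lemma energyBil_self (u : X → ℝ) : energyBil b u u = energy b u := by
  unfold energyBil energy
  congr 1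
  exact tsum_congr fun p => by ring

lemma energyBil_comm (u v : X → ℝ) : energyBil b u v = energyBil b v u := by
  unfold energyBil
  congr 1
  exact tsum_congr fun p => by ring

lemma energyBil_add_left (hb : IsGraph b) {u v w : X → ℝ}
    (hu : FinEnergy b u) (hv : FinEnergy b v) (hw : FinEnergy b w) :
    energyBil b (fun x => u x + v x) w = energyBil b u w + energyBil b v w := by
  unfold energyBil
  rw [← mul_add]
  congr 1
  rw [← Summable.tsum_add (summable_energy_cross hb hu hw) (summable_energy_cross hb hv hw)]
  exact tsum_congr fun p => by ring

lemma energyBil_smul_left (c : ℝ) (u v : X → ℝ) :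
    energyBil b (fun x => c * u x) v = c * energyBil b u v := by
  unfold energyBil
  have h : (∑' p : X × X, b p.1 p.2 * ((fun x => c * u x) p.1 - (fun x => c * u x) p.2) *
      (v p.1 - v p.2)) = ∑' p : X × X, c * (b p.1 p.2 * (u p.1 - u p.2) * (v p.1 - v p.2)) :=
    tsum_congr fun p => by ring
  rw [h, tsum_mul_left]
  ring

lemma l2bil_add_left (hm : FinMeasure m) {u v w : X → ℝ}
    (hu : MemL2 m u) (hv : MemL2 m v) (hw : MemL2 m w) :
    (∑' x, (u x + v x) * w x * m x) = (∑' x, u x * w x * m x) + ∑' x, v x * w x * m x := by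
  rw [← Summable.tsum_add (summable_mul_l2 hm hu hw) (summable_mul_l2 hm hv hw)]
  exact tsum_congr fun x => by ring

lemma energy_sub_const (u : X → ℝ) (c : ℝ) :
    energy b (fun x => u x - c) = energy b u := by
  unfold energy
  congr 1
  exact tsum_congr fun p => by ring

lemma energy_smul (c : ℝ) (u : X → ℝ) :
    energy b (fun x => c * u x) = c ^ 2 * energy b u := by
  unfold energy
  have h : (∑' p : X × X, b p.1 p.2 * ((fun x => c * u x) p.1 - (fun x => c * u x) p.2) ^ 2)
      = ∑' p : X × X, c ^ 2 * (b p.1 p.2 * (u p.1 - u p.2) ^ 2) := tsum_congr fun p => by ring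
  rw [h, tsum_mul_left]
  ring

lemma l2_smul (c : ℝ) (u : X → ℝ) :
    (∑' x, (c * u x) ^ 2 * m x) = c ^ 2 * ∑' x, u x ^ 2 * m x := by
  have h : (∑' x, (c * u x) ^ 2 * m x) = ∑' x, c ^ 2 * (u x ^ 2 * m x) :=
    tsum_congr fun x => by ring
  rw [h, tsum_mul_left]

lemma mean_smul (c : ℝ) (u : X → ℝ) : mean m (fun x => c * u x) = c * mean m u := by
  unfold mean
  have h : (∑' x, (c * u x) * m x) = c * ∑' x, u x * m x := by
    rw [← tsum_mul_left]; exact tsum_congr fun x => by ring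
  rw [h, mul_div_assoc]

lemma mtot_pos (hm : FinMeasure m) [Nonempty X] : 0 < ∑' x, m x := by
  obtain ⟨x⟩ := (inferInstance : Nonempty X)
  exact lt_of_lt_of_le (hm.pos x) (hm.summable.le_tsum x fun j _ => (hm.pos j).le)

lemma mean_center (hm : FinMeasure m) [Nonempty X] {u : X → ℝ} (hu : MemL2 m u) :
    mean m (fun x => u x - mean m u) = 0 := by
  have hM : (0 : ℝ) < ∑' x, m x := mtot_pos hm
  have h1 : (∑' x, (u x - mean m u) * m x)
      = (∑' x, u x * m x) - mean m u * ∑' x, m x := by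
    rw [← tsum_mul_left (a := mean m u),
      ← Summable.tsum_sub (summable_mul_m hm hu) (hm.summable.mul_left (mean m u))]
    exact tsum_congr fun x => by ring
  unfold mean at h1 ⊢
  rw [h1]
  field_simp
  ring

end Aux2
/-- Wrapper type for `D(Q)`, used to put a Hilbert space structure on the form domain. -/
structure DQFun {X : Type*} (b : X → X → ℝ) (m : X → ℝ) : Type _ where
  toFun : X → ℝ
  mem' : MemDQ b m toFun

section Aux3

open Filter Topology

variable {X : Type*} {b : X → X → ℝ} {m : X → ℝ}

lemma uniform_sup_bound (hb : IsGraph b) (hm : FinMeasure m) (hcc : CanCompact b m) :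
    ∃ K : ℝ, 0 ≤ K ∧ ∀ u : X → ℝ, MemDQ b m u → ∀ x : X,
      u x ^ 2 ≤ K ^ 2 * (energy b u + ∑' y, u y ^ 2 * m y) := by
  classical
  let V := DQFun b m
  have hinj : Function.Injective (DQFun.toFun : V → X → ℝ) := fun u v h => by
    cases u; cases v; simpa using h
  letI : Zero V := ⟨⟨fun _ => 0, memDQ_const hb hm 0⟩⟩
  letI : Add V := ⟨fun u v => ⟨fun x => u.toFun x + v.toFun x, memDQ_add hb hm u.mem' v.mem'⟩⟩
  letI : Neg V := ⟨fun u => ⟨fun x => -u.toFun x, by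
    have h := memDQ_smul hb (-1) u.mem'
    refine ⟨h.1.congr fun x => ?_, h.2.congr fun p => ?_⟩
    · show ((-1) * u.toFun x) ^ 2 * m x = (-u.toFun x) ^ 2 * m x
      ring
    · show b p.1 p.2 * ((-1) * u.toFun p.1 - (-1) * u.toFun p.2) ^ 2
          = b p.1 p.2 * (-u.toFun p.1 - -u.toFun p.2) ^ 2
      ring⟩⟩
  letI : Sub V := ⟨fun u v => ⟨fun x => u.toFun x - v.toFun x, memDQ_sub hb hm u.mem' v.mem'⟩⟩
  letI : SMul ℝ V := ⟨fun c u => ⟨fun x => c * u.toFun x, memDQ_smul hb c u.mem'⟩⟩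
  letI : SMul ℕ V := ⟨fun n u => ⟨fun x => (n : ℝ) * u.toFun x, memDQ_smul hb _ u.mem'⟩⟩
  letI : SMul ℤ V := ⟨fun n u => ⟨fun x => (n : ℝ) * u.toFun x, memDQ_smul hb _ u.mem'⟩⟩
  letI : AddCommGroup V :=
    hinj.addCommGroup DQFun.toFun rfl (fun _ _ => rfl) (fun _ => rfl) (fun _ _ => rfl)
      (fun u n => funext fun x => by show (n : ℝ) * u.toFun x = n • u.toFun x; simp)
      (fun u n => funext fun x => by show (n : ℝ) * u.toFun x = n • u.toFun x; simp)
  letI : Module ℝ V :=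
    Function.Injective.module ℝ
      ({ toFun := DQFun.toFun, map_zero' := rfl, map_add' := fun _ _ => rfl } :
        V →+ (X → ℝ)) hinj (fun _ _ => rfl)
  letI core : InnerProductSpace.Core ℝ V :=
    { inner := fun u v => energyBil b u.toFun v.toFun + ∑' x, u.toFun x * v.toFun x * m x
      conj_inner_symm := fun u v => by
        simp only [starRingEnd_apply, star_trivial]
        rw [energyBil_comm]
        congr 1
        exact tsum_congr fun x => by ring
      re_inner_nonneg := fun u => by
        have h1 : energyBil b u.toFun u.toFun = energy b u.toFun := energyBil_self u.toFun
        have h2 : (0:ℝ) ≤ ∑' x, u.toFun x * u.toFun x * m x :=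
          tsum_nonneg fun x => mul_nonneg (mul_self_nonneg _) (hm.pos x).le
        have h3 := energy_nonneg hb u.toFun
        show (0:ℝ) ≤ energyBil b u.toFun u.toFun + ∑' x, u.toFun x * u.toFun x * m x
        linarith
      add_left := fun u v w => by
        have h1 : energyBil b (fun x => u.toFun x + v.toFun x) w.toFun
            = energyBil b u.toFun w.toFun + energyBil b v.toFun w.toFun :=
          energyBil_add_left hb u.mem'.2 v.mem'.2 w.mem'.2
        have h2 := l2bil_add_left hm u.mem'.1 v.mem'.1 w.mem'.1
        show energyBil b (fun x => u.toFun x + v.toFun x) w.toFun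
            + (∑' x, (u.toFun x + v.toFun x) * w.toFun x * m x) = _
        rw [h1, h2]
        ring
      smul_left := fun u v r => by
        simp only [starRingEnd_apply, star_trivial]
        have h1 := energyBil_smul_left (b := b) r u.toFun v.toFun
        have h2 : (∑' x, (r * u.toFun x) * v.toFun x * m x)
            = r * ∑' x, u.toFun x * v.toFun x * m x := by
          rw [← tsum_mul_left]; exact tsum_congr fun x => by ring
        show energyBil b (fun x => r * u.toFun x) v.toFun
            + (∑' x, (r * u.toFun x) * v.toFun x * m x) = _
        rw [h1, h2]
        ring
      definite := fun u h => by
        have hE := energy_nonneg hb u.toFun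
        have hBil : energyBil b u.toFun u.toFun = energy b u.toFun := energyBil_self u.toFun
        have hsum : Summable (fun x => u.toFun x * u.toFun x * m x) :=
          summable_mul_l2 hm u.mem'.1 u.mem'.1
        have hnn : (0:ℝ) ≤ ∑' x, u.toFun x * u.toFun x * m x :=
          tsum_nonneg fun x => mul_nonneg (mul_self_nonneg _) (hm.pos x).le
        have h' : energyBil b u.toFun u.toFun + (∑' x, u.toFun x * u.toFun x * m x) = 0 := h
        have h2 : (∑' x, u.toFun x * u.toFun x * m x) = 0 := by rw [hBil] at h'; linarith
        refine hinj (funext fun x => ?_)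
        show u.toFun x = (0:ℝ)
        have hx := Summable.le_tsum hsum x (fun j _ => mul_nonneg (mul_self_nonneg _) (hm.pos j).le)
        rw [h2] at hx
        have hmx := hm.pos x
        have h9 : u.toFun x * u.toFun x ≤ 0 := by
          by_contra hpos
          push_neg at hpos
          have := mul_pos hpos hmx
          linarith
        exact mul_self_eq_zero.mp (le_antisymm h9 (mul_self_nonneg _)) }
  letI : NormedAddCommGroup V := core.toNormedAddCommGroup
  letI : InnerProductSpace ℝ V := InnerProductSpace.ofCore core.toCore
  have hnormsq : ∀ u : V, ‖u‖ ^ 2 = energy b u.toFun + ∑' x, u.toFun x ^ 2 * m x := by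
    intro u
    rw [← real_inner_self_eq_norm_sq]
    show energyBil b u.toFun u.toFun + (∑' x, u.toFun x * u.toFun x * m x) = _
    rw [energyBil_self]
    congr 1
    exact tsum_congr fun x => by ring
  have hpoint : ∀ (w : V) (x : X), |w.toFun x| ≤ (Real.sqrt (m x))⁻¹ * ‖w‖ := by
    intro w x
    have h1 : w.toFun x ^ 2 * m x ≤ ‖w‖ ^ 2 := by
      rw [hnormsq w]
      have hterm := Summable.le_tsum w.mem'.1 x (fun j _ => mul_nonneg (sq_nonneg _) (hm.pos j).le)
      have := energy_nonneg hb w.toFun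
      linarith
    have hmx := hm.pos x
    have h2 : |w.toFun x| * Real.sqrt (m x) ≤ ‖w‖ := by
      have h3 : Real.sqrt (w.toFun x ^ 2 * m x) ≤ Real.sqrt (‖w‖ ^ 2) := Real.sqrt_le_sqrt h1
      rwa [Real.sqrt_mul (sq_nonneg _), Real.sqrt_sq_eq_abs, Real.sqrt_sq (norm_nonneg _)] at h3
    have hs : 0 < Real.sqrt (m x) := Real.sqrt_pos.mpr hmx
    rw [inv_mul_eq_div, le_div_iff₀ hs]
    exact h2
  let φ : X → V →L[ℝ] ℝ := fun x =>
    LinearMap.mkContinuous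
      ({ toFun := fun u => u.toFun x
         map_add' := fun u v => rfl
         map_smul' := fun c u => rfl } : V →ₗ[ℝ] ℝ)
      ((Real.sqrt (m x))⁻¹)
      (fun u => by simpa [Real.norm_eq_abs] using hpoint u x)
  haveI : CompleteSpace V := by
    apply Metric.complete_of_cauchySeq_tendsto
    intro f hf
    have hptC : ∀ x : X, CauchySeq fun n => (f n).toFun x := fun x =>
      (φ x).uniformContinuous.comp_cauchySeq hf
    choose u hu using fun x => cauchySeq_tendsto_of_complete (hptC x)
    obtain ⟨R, hR0, hRd⟩ := cauchySeq_bdd hf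
    set B := ‖f 0‖ + R with hB
    have hfB : ∀ n, ‖f n‖ ≤ B := by
      intro n
      have h1 : dist (f n) (f 0) < R := hRd n 0
      have h2 : ‖f n‖ - ‖f 0‖ ≤ ‖f n - f 0‖ := norm_sub_norm_le _ _
      rw [← dist_eq_norm] at h2
      simp only [hB]
      linarith
    have hmemL2 : MemL2 m u := by
      apply summable_of_sum_le (c := B ^ 2) (fun x => mul_nonneg (sq_nonneg _) (hm.pos x).le)
      intro s
      have hlim : Tendsto (fun n => ∑ x ∈ s, (f n).toFun x ^ 2 * m x) atTop
          (𝓝 (∑ x ∈ s, u x ^ 2 * m x)) :=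
        tendsto_finset_sum s fun x _ => ((hu x).pow 2).mul_const (m x)
      refine le_of_tendsto hlim (Filter.Eventually.of_forall fun n => ?_)
      have h1 : (∑ x ∈ s, (f n).toFun x ^ 2 * m x) ≤ ∑' x, (f n).toFun x ^ 2 * m x :=
        Summable.sum_le_tsum s (fun x _ => mul_nonneg (sq_nonneg _) (hm.pos x).le) (f n).mem'.1
      have h2 : (∑' x, (f n).toFun x ^ 2 * m x) ≤ ‖f n‖ ^ 2 := by
        rw [hnormsq (f n)]
        linarith [energy_nonneg hb (f n).toFun]
      have h3 : ‖f n‖ ^ 2 ≤ B ^ 2 := pow_le_pow_left₀ (norm_nonneg _) (hfB n) 2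
      linarith
    have hfinE : FinEnergy b u := by
      apply summable_of_sum_le (c := 2 * B ^ 2) (fun p => mul_nonneg (hb.nonneg _ _) (sq_nonneg _))
      intro s
      have hlim : Tendsto
          (fun n => ∑ p ∈ s, b p.1 p.2 * ((f n).toFun p.1 - (f n).toFun p.2) ^ 2) atTop
          (𝓝 (∑ p ∈ s, b p.1 p.2 * (u p.1 - u p.2) ^ 2)) :=
        tendsto_finset_sum s fun p _ => (((hu p.1).sub (hu p.2)).pow 2).const_mul _
      refine le_of_tendsto hlim (Filter.Eventually.of_forall fun n => ?_)
      have h1 : (∑ p ∈ s, b p.1 p.2 * ((f n).toFun p.1 - (f n).toFun p.2) ^ 2)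
          ≤ ∑' p : X × X, b p.1 p.2 * ((f n).toFun p.1 - (f n).toFun p.2) ^ 2 :=
        Summable.sum_le_tsum s (fun p _ => mul_nonneg (hb.nonneg _ _) (sq_nonneg _)) (f n).mem'.2
      have h2 : (∑' p : X × X, b p.1 p.2 * ((f n).toFun p.1 - (f n).toFun p.2) ^ 2)
          = 2 * energy b (f n).toFun := by
        unfold energy; ring
      have h3 : energy b (f n).toFun ≤ ‖f n‖ ^ 2 := by
        rw [hnormsq (f n)]
        have := l2sum_nonneg hm (f n).toFun
        linarith
      have h4 : ‖f n‖ ^ 2 ≤ B ^ 2 := pow_le_pow_left₀ (norm_nonneg _) (hfB n) 2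
      linarith
    refine ⟨⟨u, hmemL2, hfinE⟩, ?_⟩
    rw [Metric.tendsto_atTop]
    intro ε hε
    obtain ⟨N, hN⟩ := Metric.cauchySeq_iff.mp hf (ε/2) (by linarith)
    refine ⟨N, fun p hp => ?_⟩
    have hgLmem : MemDQ b m (fun x => (f p).toFun x - u x) :=
      memDQ_sub hb hm (f p).mem' ⟨hmemL2, hfinE⟩
    have key : energy b (fun x => (f p).toFun x - u x) +
        (∑' x, ((f p).toFun x - u x) ^ 2 * m x) ≤ (ε/2) ^ 2 := by
      have hFG : ∀ (F : Finset X) (G : Finset (X × X)),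
          (∑ x ∈ F, ((f p).toFun x - u x) ^ 2 * m x) +
          (1/2) * (∑ r ∈ G, b r.1 r.2 *
            (((f p).toFun r.1 - u r.1) - ((f p).toFun r.2 - u r.2)) ^ 2)
          ≤ (ε/2) ^ 2 := by
        intro F G
        have hlim : Tendsto (fun q : ℕ =>
            (∑ x ∈ F, ((f p).toFun x - (f q).toFun x) ^ 2 * m x) +
            (1/2) * ∑ r ∈ G, b r.1 r.2 *
              (((f p).toFun r.1 - (f q).toFun r.1) - ((f p).toFun r.2 - (f q).toFun r.2)) ^ 2)
            atTop
            (𝓝 ((∑ x ∈ F, ((f p).toFun x - u x) ^ 2 * m x) +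
            (1/2) * ∑ r ∈ G, b r.1 r.2 *
              (((f p).toFun r.1 - u r.1) - ((f p).toFun r.2 - u r.2)) ^ 2)) := by
          apply Tendsto.add
          · exact tendsto_finset_sum F fun x _ =>
              ((tendsto_const_nhds.sub (hu x)).pow 2).mul_const (m x)
          · exact (tendsto_finset_sum G fun r _ =>
              (((tendsto_const_nhds.sub (hu r.1)).sub
                (tendsto_const_nhds.sub (hu r.2))).pow 2).const_mul _).const_mul (1/2)
        refine le_of_tendsto hlim ?_
        filter_upwards [Filter.eventually_ge_atTop N] with q hq
        set g : V := f p - f q with hgdef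
        have hd : ‖g‖ ≤ ε/2 := by
          rw [hgdef, ← dist_eq_norm]
          exact le_of_lt (hN p hp q hq)
        have hw : ‖g‖ ^ 2 = energy b (fun x => (f p).toFun x - (f q).toFun x)
            + ∑' x, ((f p).toFun x - (f q).toFun x) ^ 2 * m x := hnormsq g
        have h1 : (∑ x ∈ F, ((f p).toFun x - (f q).toFun x) ^ 2 * m x)
            ≤ ∑' x, ((f p).toFun x - (f q).toFun x) ^ 2 * m x :=
          Summable.sum_le_tsum F (fun x _ => mul_nonneg (sq_nonneg _) (hm.pos x).le) g.mem'.1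
        have h2 : (∑ r ∈ G, b r.1 r.2 *
              (((f p).toFun r.1 - (f q).toFun r.1) - ((f p).toFun r.2 - (f q).toFun r.2)) ^ 2)
            ≤ ∑' r : X × X, b r.1 r.2 *
              (((f p).toFun r.1 - (f q).toFun r.1) - ((f p).toFun r.2 - (f q).toFun r.2)) ^ 2 :=
          Summable.sum_le_tsum G (fun r _ => mul_nonneg (hb.nonneg _ _) (sq_nonneg _)) g.mem'.2
        have h3 : energy b (fun x => (f p).toFun x - (f q).toFun x) = (1/2) * ∑' r : X × X,
            b r.1 r.2 * (((f p).toFun r.1 - (f q).toFun r.1)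
              - ((f p).toFun r.2 - (f q).toFun r.2)) ^ 2 := rfl
        have h4 : ‖g‖ ^ 2 ≤ (ε/2) ^ 2 := pow_le_pow_left₀ (norm_nonneg _) hd 2
        have h5 : (0:ℝ) ≤ ∑' x, ((f p).toFun x - (f q).toFun x) ^ 2 * m x :=
          l2sum_nonneg hm _
        rw [hw, h3] at h4
        linarith
      set A := ∑' x, ((f p).toFun x - u x) ^ 2 * m x with hA
      set E := energy b (fun x => (f p).toFun x - u x) with hE
      have hE_le : ∀ F : Finset X,
          (∑ x ∈ F, ((f p).toFun x - u x) ^ 2 * m x) ≤ (ε/2)^2 - E := by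
        intro F
        have h6 : (∑' r : X × X, b r.1 r.2 *
            (((f p).toFun r.1 - u r.1) - ((f p).toFun r.2 - u r.2)) ^ 2)
            ≤ 2 * ((ε/2)^2 - ∑ x ∈ F, ((f p).toFun x - u x) ^ 2 * m x) :=
          Summable.tsum_le_of_sum_le hgLmem.2 (fun G => by linarith [hFG F G])
        have h7 : E = (1/2) * ∑' r : X × X, b r.1 r.2 *
            (((f p).toFun r.1 - u r.1) - ((f p).toFun r.2 - u r.2)) ^ 2 := rfl
        linarith
      have hA_le : A ≤ (ε/2)^2 - E := Summable.tsum_le_of_sum_le hgLmem.1 hE_le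
      linarith
    have h8 : ‖f p - (⟨u, hmemL2, hfinE⟩ : V)‖ ^ 2 ≤ (ε/2) ^ 2 := by
      have h9 : ‖f p - (⟨u, hmemL2, hfinE⟩ : V)‖ ^ 2
          = energy b (fun x => (f p).toFun x - u x) + ∑' x, ((f p).toFun x - u x) ^ 2 * m x :=
        hnormsq _
      rw [h9]; exact key
    have h10 : ‖f p - (⟨u, hmemL2, hfinE⟩ : V)‖ ≤ ε/2 := by
      have := Real.sqrt_le_sqrt h8
      rwa [Real.sqrt_sq (norm_nonneg _), Real.sqrt_sq (by linarith)] at this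
    rw [dist_eq_norm]
    linarith
  have hpb : ∀ u : V, ∃ C, ∀ x : X, ‖φ x u‖ ≤ C := by
    intro u
    obtain ⟨M, hM⟩ := hcc u.toFun u.mem'
    exact ⟨M, fun x => by rw [Real.norm_eq_abs]; exact hM x⟩
  obtain ⟨C', hC'⟩ := banach_steinhaus hpb
  refine ⟨max C' 0, le_max_right _ _, fun u hu x => ?_⟩
  set w : V := ⟨u, hu⟩ with hw
  have h1 : |u x| ≤ max C' 0 * ‖w‖ := by
    have h2 : ‖φ x w‖ ≤ ‖φ x‖ * ‖w‖ := (φ x).le_opNorm w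
    have h3 : ‖φ x‖ ≤ max C' 0 := le_trans (hC' x) (le_max_left _ _)
    have h4 := mul_le_mul_of_nonneg_right h3 (norm_nonneg w)
    have h5 : ‖φ x w‖ = |u x| := by rw [Real.norm_eq_abs]; rfl
    linarith
  have h6 : u x ^ 2 ≤ (max C' 0) ^ 2 * ‖w‖ ^ 2 := by
    nlinarith [abs_nonneg (u x), norm_nonneg w, sq_abs (u x)]
  have h7 : ‖w‖ ^ 2 = energy b u + ∑' y, u y ^ 2 * m y := hnormsq w
  rw [h7] at h6
  exact h6

end Aux3
section Aux4

open Filter Topology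

variable {X : Type*} {b : X → X → ℝ} {m : X → ℝ}

lemma poincare (hb : IsGraph b) (hconn : GraphConnected b) (hm : FinMeasure m)
    (hcc : CanCompact b m) :
    ∃ lam : ℝ, 0 < lam ∧ ∀ u : X → ℝ, MemDQ b m u → mean m u = 0 →
      (∑' x, u x ^ 2 * m x) ≤ lam * energy b u := by
  classical
  obtain ⟨K, hK0, hK⟩ := uniform_sup_bound hb hm hcc
  by_contra hcon
  push_neg at hcon
  have hsel : ∀ n : ℕ, ∃ u : X → ℝ, MemDQ b m u ∧ mean m u = 0 ∧
      ((n : ℝ) + 1) * energy b u < ∑' x, u x ^ 2 * m x := by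
    intro n
    obtain ⟨u, h1, h2, h3⟩ := hcon ((n : ℝ) + 1) (by positivity)
    exact ⟨u, h1, h2, h3⟩
  choose u0 hmem hmean hlt using hsel
  have hEnn : ∀ n, 0 ≤ energy b (u0 n) := fun n => energy_nonneg hb (u0 n)
  have hl2pos : ∀ n : ℕ, 0 < ∑' x, u0 n x ^ 2 * m x := by
    intro n
    have := hlt n
    nlinarith [hEnn n, Nat.cast_nonneg (α := ℝ) n]
  haveI hne : Nonempty X := by
    by_contra hemp
    rw [not_nonempty_iff] at hemp
    have h0 : (∑' x, u0 0 x ^ 2 * m x) = 0 := tsum_empty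
    have := hl2pos 0
    rw [h0] at this
    exact lt_irrefl _ this
  set s : ℕ → ℝ := fun n => Real.sqrt (∑' x, u0 n x ^ 2 * m x) with hs
  have hspos : ∀ n, 0 < s n := fun n => Real.sqrt_pos.mpr (hl2pos n)
  have hsq : ∀ n, s n ^ 2 = ∑' x, u0 n x ^ 2 * m x := fun n =>
    Real.sq_sqrt (hl2pos n).le
  set v : ℕ → X → ℝ := fun n x => (s n)⁻¹ * u0 n x with hv
  have hv_mem : ∀ n, MemDQ b m (v n) := fun n => memDQ_smul hb _ (hmem n)
  have hv_l2 : ∀ n, (∑' x, v n x ^ 2 * m x) = 1 := by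
    intro n
    have h1 : (∑' x, ((s n)⁻¹ * u0 n x) ^ 2 * m x)
        = ((s n)⁻¹) ^ 2 * ∑' x, u0 n x ^ 2 * m x := l2_smul _ _
    rw [hv]
    rw [h1, ← hsq n, inv_pow]
    field_simp
    exact div_self (ne_of_gt (hspos n))
  have hv_energy : ∀ n : ℕ, energy b (v n) < 1 / ((n : ℝ) + 1) := by
    intro n
    have h1 : energy b (v n) = ((s n)⁻¹) ^ 2 * energy b (u0 n) := energy_smul _ _
    have hn1 : (0:ℝ) < (n : ℝ) + 1 := by positivity
    have h2 : energy b (u0 n) < s n ^ 2 / ((n : ℝ) + 1) := by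
      rw [hsq n, lt_div_iff₀ hn1]
      linarith [hlt n]
    have h3 : ((s n)⁻¹) ^ 2 * energy b (u0 n) < ((s n)⁻¹) ^ 2 * (s n ^ 2 / ((n : ℝ) + 1)) := by
      apply mul_lt_mul_of_pos_left h2
      have := hspos n
      positivity
    have h4 : ((s n)⁻¹) ^ 2 * (s n ^ 2 / ((n : ℝ) + 1)) = 1 / ((n : ℝ) + 1) := by
      rw [inv_pow]
      field_simp
      exact div_self (ne_of_gt (hspos n))
    rw [h1]
    rw [h4] at h3
    exact h3
  have hv_energy1 : ∀ n : ℕ, energy b (v n) < 1 := by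
    intro n
    have h1 := hv_energy n
    have hn1 : (1:ℝ) / ((n : ℝ) + 1) ≤ 1 := by
      rw [div_le_one (by positivity)]
      simp [Nat.cast_nonneg]
    linarith
  have hbound : ∀ n x, v n x ^ 2 ≤ 2 * K ^ 2 := by
    intro n x
    have h1 := hK (v n) (hv_mem n) x
    rw [hv_l2 n] at h1
    have h2 := hv_energy1 n
    nlinarith [sq_nonneg K]
  have hedge : ∀ x y : X, 0 < b x y →
      Tendsto (fun n => v n x - v n y) atTop (𝓝 0) := by
    intro x y hxy
    have hsq2 : ∀ n, (v n x - v n y) ^ 2 ≤ (2 / b x y) * (1 / ((n : ℝ) + 1)) := by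
      intro n
      have h1 : b x y * (v n x - v n y) ^ 2
          ≤ ∑' p : X × X, b p.1 p.2 * (v n p.1 - v n p.2) ^ 2 :=
        Summable.le_tsum (hv_mem n).2 (x, y)
          (fun j _ => mul_nonneg (hb.nonneg _ _) (sq_nonneg _))
      have h2 : (∑' p : X × X, b p.1 p.2 * (v n p.1 - v n p.2) ^ 2) = 2 * energy b (v n) := by
        unfold energy; ring
      have h3 := hv_energy n
      rw [h2] at h1
      rw [div_mul_div_comm, le_div_iff₀ (by positivity : (0:ℝ) < b x y * ((n:ℝ)+1))]
      calc (v n x - v n y) ^ 2 * (b x y * ((n:ℝ)+1))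
          = ((n:ℝ)+1) * (b x y * (v n x - v n y) ^ 2) := by ring
        _ ≤ ((n:ℝ)+1) * (2 * energy b (v n)) := by
            apply mul_le_mul_of_nonneg_left h1 (by positivity)
        _ ≤ 2 * 1 := by
            have h5 := hv_energy n
            rw [lt_div_iff₀ (by positivity : (0:ℝ) < (n:ℝ)+1)] at h5
            nlinarith
    have hsqt : Tendsto (fun n => (v n x - v n y) ^ 2) atTop (𝓝 0) := by
      apply squeeze_zero (fun n => sq_nonneg _) hsq2
      have := tendsto_one_div_add_atTop_nhds_zero_nat.const_mul (2 / b x y)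
      simpa using this
    have habs : Tendsto (fun n => |v n x - v n y|) atTop (𝓝 0) := by
      have h6 := hsqt.sqrt
      rw [Real.sqrt_zero] at h6
      exact h6.congr (fun n => Real.sqrt_sq_eq_abs _)
    rw [tendsto_zero_iff_abs_tendsto_zero]
    exact habs
  have hchain : ∀ x y : X, Tendsto (fun n => v n x - v n y) atTop (𝓝 0) := by
    intro x y
    induction hconn x y with
    | refl => simpa using (tendsto_const_nhds : Tendsto (fun _ : ℕ => (0:ℝ)) atTop _)
    | @tail c d hxc hcd ih =>
        have h2 := hedge c d hcd
        have h3 := ih.add h2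
        rw [add_zero] at h3
        exact h3.congr (fun n => by ring)
  have x0 : X := Classical.arbitrary X
  set a : ℕ → ℝ := fun n => v n x0 with ha
  set M : ℝ := Real.sqrt (2 * K ^ 2) with hM
  have habsv : ∀ n x, |v n x| ≤ M := by
    intro n x
    have h1 : |v n x| = Real.sqrt ((v n x) ^ 2) := (Real.sqrt_sq_eq_abs _).symm
    rw [h1, hM]
    exact Real.sqrt_le_sqrt (hbound n x)
  have hsubsum : ∀ n, Summable (fun x => (v n x - a n) * m x) := fun n =>
    summable_mul_m hm (memDQ_sub hb hm (hv_mem n) (memDQ_const hb hm (a n))).1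
  have hmtot : 0 < ∑' x, m x := mtot_pos hm
  have hsum0 : ∀ n, (∑' x, v n x * m x) = 0 := by
    intro n
    have h1 : mean m (v n) = 0 := by
      have h2 : mean m (fun x => (s n)⁻¹ * u0 n x) = (s n)⁻¹ * mean m (u0 n) := mean_smul _ _
      rw [hv, h2, hmean n, mul_zero]
    unfold mean at h1
    rcases div_eq_zero_iff.mp h1 with h | h
    · exact h
    · exact absurd h (ne_of_gt hmtot)
  have hsplit : ∀ n, (∑' x, v n x * m x)
      = (∑' x, (v n x - a n) * m x) + a n * (∑' x, m x) := by
    intro n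
    rw [← tsum_mul_left (a := a n), ← Summable.tsum_add (hsubsum n) (hm.summable.mul_left (a n))]
    exact tsum_congr fun x => by ring
  have hT : Tendsto (fun n => ∑' x, (v n x - a n) * m x) atTop (𝓝 0) := by
    have h0 : (∑' x : X, (0:ℝ)) = 0 := tsum_zero
    rw [← h0]
    apply tendsto_tsum_of_dominated_convergence
      (bound := fun x => 2 * M * m x) (hm.summable.mul_left (2 * M))
    · intro x
      have h1 := (hchain x x0).mul_const (m x)
      rw [zero_mul] at h1
      exact h1
    · refine Filter.Eventually.of_forall fun n => fun x => ?_
      rw [Real.norm_eq_abs, abs_mul, abs_of_nonneg (hm.pos x).le]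
      have h2 : |v n x - a n| ≤ 2 * M := by
        have := abs_sub (v n x) (a n)
        have h3 := habsv n x
        have h4 := habsv n x0
        calc |v n x - a n| ≤ |v n x| + |a n| := abs_sub _ _
          _ ≤ 2 * M := by rw [ha]; simp only []; linarith
      exact mul_le_mul_of_nonneg_right h2 (hm.pos x).le
  have ha0 : Tendsto a atTop (𝓝 0) := by
    have h1 : ∀ n, a n = -(∑' x, (v n x - a n) * m x) / (∑' x, m x) := by
      intro n
      have h2 := hsplit n
      rw [hsum0 n] at h2
      field_simp
      linarith
    have h3 : Tendsto (fun n => -(∑' x, (v n x - a n) * m x) / (∑' x, m x)) atTop (𝓝 0) := by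
      have h4 := (hT.neg).div_const (∑' x, m x)
      simpa using h4
    exact h3.congr (fun n => (h1 n).symm)
  have hvx : ∀ x, Tendsto (fun n => v n x) atTop (𝓝 0) := by
    intro x
    have h1 := (hchain x x0).add ha0
    rw [add_zero] at h1
    exact h1.congr (fun n => by rw [ha]; ring)
  have hfinal : Tendsto (fun n => ∑' x, v n x ^ 2 * m x) atTop (𝓝 0) := by
    have h0 : (∑' x : X, (0:ℝ)) = 0 := tsum_zero
    rw [← h0]
    apply tendsto_tsum_of_dominated_convergence
      (bound := fun x => 2 * K ^ 2 * m x) (hm.summable.mul_left (2 * K ^ 2))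
    · intro x
      have h1 := ((hvx x).pow 2).mul_const (m x)
      simpa using h1
    · refine Filter.Eventually.of_forall fun n => fun x => ?_
      rw [Real.norm_eq_abs, abs_mul, abs_of_nonneg (hm.pos x).le, abs_of_nonneg (sq_nonneg _)]
      exact mul_le_mul_of_nonneg_right (hbound n x) (hm.pos x).le
  have hconst : Tendsto (fun _ : ℕ => (1:ℝ)) atTop (𝓝 0) :=
    hfinal.congr (fun n => hv_l2 n)
  exact one_ne_zero (tendsto_nhds_unique hconst tendsto_const_nhds).symm

end Aux4
section Aux5

open Filter Topology

variable {X : Type*} {b : X → X → ℝ} {m : X → ℝ}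

lemma key_bound (hb : IsGraph b) (hconn : GraphConnected b) (hm : FinMeasure m)
    (hcc : CanCompact b m) :
    ∃ C : ℝ, 0 < C ∧ ∀ u : X → ℝ, MemDQ b m u → ∀ x : X,
      (u x - mean m u) ^ 2 ≤ C * energy b u := by
  rcases isEmpty_or_nonempty X with hX | hX
  · exact ⟨1, one_pos, fun u _ x => (IsEmpty.false x).elim⟩
  obtain ⟨K, hK0, hK⟩ := uniform_sup_bound hb hm hcc
  obtain ⟨lam, hlam0, hlam⟩ := poincare hb hconn hm hcc
  refine ⟨K ^ 2 * (1 + lam) + 1, by positivity, fun u hu x => ?_⟩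
  set c := mean m u with hc
  have hw : MemDQ b m (fun y => u y - c) := memDQ_sub hb hm hu (memDQ_const hb hm c)
  have hmean0 : mean m (fun y => u y - c) = 0 := mean_center hm hu.1
  have hEw : energy b (fun y => u y - c) = energy b u := energy_sub_const u c
  have hP : (∑' y, (u y - c) ^ 2 * m y) ≤ lam * energy b u := by
    rw [← hEw]; exact hlam _ hw hmean0
  have h1 := hK _ hw x
  rw [hEw] at h1
  have hE := energy_nonneg hb u
  nlinarith [mul_le_mul_of_nonneg_left hP (sq_nonneg K), sq_nonneg K]

end Aux5

/-- Trudinger-Moser inequality. -/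
theorem stmt4 {X : Type*} [Countable X] (b : X → X → ℝ) (m : X → ℝ)
    (hb : IsGraph b) (hconn : GraphConnected b) (hm : FinMeasure m)
    (hcc : CanCompact b m) :
    (∀ β : ℝ, ∃ C > (0 : ℝ), ∀ u : X → ℝ, MemDQ b m u →
      (∑' x, Real.exp (β * (u x - mean m u) ^ 2) * m x) ≤
        (∑' x, m x) * Real.exp (C * |β| * energy b u)) ∧
    (∀ β : ℝ, ∃ C > (0 : ℝ), ∀ u : X → ℝ, MemDQ b m u →
      energy b u = 1 → mean m u = 0 →
      (∑' x, Real.exp (β * u x ^ 2) * m x) ≤ C) := by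
  obtain ⟨C, hC0, hC⟩ := key_bound hb hconn hm hcc
  have main : ∀ β : ℝ, ∀ u : X → ℝ, MemDQ b m u →
      (∑' x, Real.exp (β * (u x - mean m u) ^ 2) * m x) ≤
        (∑' x, m x) * Real.exp (C * |β| * energy b u) := by
    intro β u hu
    have hE := energy_nonneg hb u
    have hpt : ∀ x, β * (u x - mean m u) ^ 2 ≤ C * |β| * energy b u := by
      intro x
      rcases le_or_gt 0 β with hβ | hβ
      · have h1 := hC u hu x
        have h2 := mul_le_mul_of_nonneg_left h1 hβ
        rw [abs_of_nonneg hβ]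
        calc β * (u x - mean m u) ^ 2 ≤ β * (C * energy b u) := h2
          _ = C * β * energy b u := by ring
      · have h1 : β * (u x - mean m u) ^ 2 ≤ 0 :=
          mul_nonpos_of_nonpos_of_nonneg hβ.le (sq_nonneg _)
        have h2 : 0 ≤ C * |β| * energy b u := by positivity
        linarith
    have hsummable : Summable (fun x => Real.exp (β * (u x - mean m u) ^ 2) * m x) := by
      refine Summable.of_nonneg_of_le (fun x => mul_nonneg (Real.exp_pos _).le (hm.pos x).le)
        (fun x => ?_) (hm.summable.mul_left (Real.exp (C * |β| * energy b u)))
      exact mul_le_mul_of_nonneg_right (Real.exp_le_exp.mpr (hpt x)) (hm.pos x).le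
    calc (∑' x, Real.exp (β * (u x - mean m u) ^ 2) * m x)
        ≤ ∑' x, Real.exp (C * |β| * energy b u) * m x :=
          Summable.tsum_le_tsum
            (fun x => mul_le_mul_of_nonneg_right (Real.exp_le_exp.mpr (hpt x)) (hm.pos x).le)
            hsummable (hm.summable.mul_left _)
      _ = (∑' x, m x) * Real.exp (C * |β| * energy b u) := by rw [tsum_mul_left]; ring
  constructor
  · exact fun β => ⟨C, hC0, fun u hu => main β u hu⟩
  · intro β
    have h0 : (0:ℝ) ≤ ∑' x, m x := tsum_nonneg fun x => (hm.pos x).le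
    have h00 : (0:ℝ) ≤ (∑' x, m x) * Real.exp (C * |β|) :=
      mul_nonneg h0 (Real.exp_pos _).le
    refine ⟨(∑' x, m x) * Real.exp (C * |β|) + 1, by linarith, fun u hu hE1 hmean => ?_⟩
    have h := main β u hu
    rw [hE1, hmean] at h
    simp only [sub_zero, mul_one] at h
    linarith
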